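/- Let l ∈ ℕ, let h : ℝ² → ℝ be C^max(l,3), let A : ℝ² → ℝ² be an invertible linear map, and let x ∈ ℝ² satisfy K₂(h)(A x) ≠ 0 and K₃(h)(A x) ≠ 0. Then I_l(h ∘ A)(x) = I_l(h)(A x), where I_l(h) = (3·K₂(h)/K₃(h))^l · W_l(h). -/

import Mathlib

/-!
With `J` the rotation by a right angle, the rotated gradient is `w_h = J ∇h`. Since
`A J Aᵀ = det A • J`, the chain rule gives `A w_{h∘A}(x) = det A • w_h(Ax)`, hence
`W_n(h ∘ A)(x) = (det A)^n W_n(h)(Ax)` for every `n`. By the symmetry of second and third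
derivatives `K₂ = W₂` and `K₃ = W₃`, so in `I_l = (3W₂/W₃)^l W_l` the powers of `det A` cancel.
-/

noncomputable def pd1 (h : (Fin 2 → ℝ) → ℝ) (i : Fin 2) (x : Fin 2 → ℝ) : ℝ :=
  fderiv ℝ h x (Pi.single i 1)

noncomputable def pd2 (h : (Fin 2 → ℝ) → ℝ) (i j : Fin 2) (x : Fin 2 → ℝ) : ℝ :=
  iteratedFDeriv ℝ 2 h x ![Pi.single i 1, Pi.single j 1]

noncomputable def pd3 (h : (Fin 2 → ℝ) → ℝ) (i j m : Fin 2) (x : Fin 2 → ℝ) : ℝ :=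
  iteratedFDeriv ℝ 3 h x ![Pi.single i 1, Pi.single j 1, Pi.single m 1]

/-- The rotated gradient `w_h(x) = (h₂(x), −h₁(x))`. -/
noncomputable def wrot (h : (Fin 2 → ℝ) → ℝ) (x : Fin 2 → ℝ) : Fin 2 → ℝ :=
  ![pd1 h 1 x, -pd1 h 0 x]

noncomputable def Wl (l : ℕ) (h : (Fin 2 → ℝ) → ℝ) (x : Fin 2 → ℝ) : ℝ :=
  (1 / l.factorial : ℝ) * iteratedFDeriv ℝ l h x (fun _ => wrot h x)

noncomputable def K2 (h : (Fin 2 → ℝ) → ℝ) (x : Fin 2 → ℝ) : ℝ :=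
  (1 / 2) * (pd2 h 0 0 x * (pd1 h 1 x) ^ 2 - 2 * pd2 h 0 1 x * pd1 h 0 x * pd1 h 1 x +
    pd2 h 1 1 x * (pd1 h 0 x) ^ 2)

noncomputable def K3 (h : (Fin 2 → ℝ) → ℝ) (x : Fin 2 → ℝ) : ℝ :=
  (1 / 6) * (pd3 h 0 0 0 x * (pd1 h 1 x) ^ 3 -
    3 * pd3 h 0 0 1 x * (pd1 h 1 x) ^ 2 * pd1 h 0 x +
    3 * pd3 h 0 1 1 x * pd1 h 1 x * (pd1 h 0 x) ^ 2 -
    pd3 h 1 1 1 x * (pd1 h 0 x) ^ 3)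

noncomputable def Il (l : ℕ) (h : (Fin 2 → ℝ) → ℝ) (x : Fin 2 → ℝ) : ℝ :=
  (3 * K2 h x / K3 h x) ^ l * Wl l h x

theorem Pi.eq_smul_single_add_smul_single {R : Type*} [Semiring R] (v : Fin 2 → R) :
    v = v 0 • Pi.single 0 1 + v 1 • Pi.single 1 1 := by
  ext i; fin_cases i <;> simp

theorem LinearMap.apply_fin_two {R M : Type*} [CommSemiring R] [AddCommMonoid M] [Module R M]
    (φ : (Fin 2 → R) →ₗ[R] M) (v : Fin 2 → R) :
    φ v = v 0 • φ (Pi.single 0 1) + v 1 • φ (Pi.single 1 1) := by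
  conv_lhs => rw [Pi.eq_smul_single_add_smul_single v]
  simp

theorem LinearMap.apply_rot_comp_eq_det_smul (A : (Fin 2 → ℝ) →ₗ[ℝ] (Fin 2 → ℝ)) (φ : (Fin 2 → ℝ) →ₗ[ℝ] ℝ) :
    A ![φ (A (Pi.single 1 1)), -φ (A (Pi.single 0 1))] =
      LinearMap.det A • ![φ (Pi.single 1 1), -φ (Pi.single 0 1)] := by
  rw [← Matrix.toLin'_toMatrix' A, LinearMap.det_toLin']
  generalize LinearMap.toMatrix' A = M
  ext k
  fin_cases k <;>
    simp [Matrix.toLin'_apply, Matrix.det_fin_two, Matrix.mulVec, dotProduct, Fin.sum_univ_two,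
      φ.apply_fin_two (M.col _)] <;> ring

section Derivatives

variable {𝕜 E F G H : Type*} [NontriviallyNormedField 𝕜] [NormedAddCommGroup E]
  [NormedSpace 𝕜 E] [NormedAddCommGroup F] [NormedSpace 𝕜 F] [NormedAddCommGroup G]
  [NormedSpace 𝕜 G] [NormedAddCommGroup H] [NormedSpace 𝕜 H]

theorem iteratedFDeriv_three_apply (f : E → F) (z : E) (m : Fin 3 → E) :
    iteratedFDeriv 𝕜 3 f z m = fderiv 𝕜 (fderiv 𝕜 (fderiv 𝕜 f)) z (m 0) (m 1) (m 2) := by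
  rw [iteratedFDeriv_succ_apply_right, iteratedFDeriv_two_apply]
  rfl

theorem fderiv_clm_apply_apply_const {c : E → F →L[𝕜] G →L[𝕜] H} {x : E}
    (hc : DifferentiableAt 𝕜 c x) (u : E) (v : F) (w : G) :
    fderiv 𝕜 (fun y => c y v w) x u = fderiv 𝕜 c x u v w := by
  rw [fderiv_clm_apply (hc.clm_apply (differentiableAt_const v)) (differentiableAt_const w),
    fderiv_clm_apply hc (differentiableAt_const v)]
  simp

end Derivatives

section Symmetry

variable {𝕜 E F : Type*} [RCLike 𝕜] [NormedAddCommGroup E] [NormedSpace 𝕜 E]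
  [NormedAddCommGroup F] [NormedSpace 𝕜 F] {f : E → F}

theorem ContDiff.fderiv_fderiv_fderiv_swap₁₂ (hf : ContDiff 𝕜 3 f) (x u v w : E) :
    fderiv 𝕜 (fderiv 𝕜 (fderiv 𝕜 f)) x u v w = fderiv 𝕜 (fderiv 𝕜 (fderiv 𝕜 f)) x v u w := by
  rw [(hf.fderiv_right (m := 2) le_rfl).contDiffAt.isSymmSndFDerivAt (by simp) u v]

theorem ContDiff.fderiv_fderiv_fderiv_swap₂₃ (hf : ContDiff 𝕜 3 f) (x u v w : E) :
    fderiv 𝕜 (fderiv 𝕜 (fderiv 𝕜 f)) x u v w = fderiv 𝕜 (fderiv 𝕜 (fderiv 𝕜 f)) x u w v := by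
  have hD2 : DifferentiableAt 𝕜 (fderiv 𝕜 (fderiv 𝕜 f)) x :=
    ((hf.fderiv_right (m := 2) le_rfl).fderiv_right (m := 1) le_rfl).differentiable
      one_ne_zero x
  have hsymm : (fun y => fderiv 𝕜 (fderiv 𝕜 f) y v w) = fun y => fderiv 𝕜 (fderiv 𝕜 f) y w v :=
    funext fun y => (hf.of_le (m := 2) (by norm_num)).contDiffAt.isSymmSndFDerivAt (by simp) v w
  rw [← fderiv_clm_apply_apply_const hD2, hsymm, fderiv_clm_apply_apply_const hD2]

end Symmetry

section LinearChangeOfVariables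

variable {𝕜 E F : Type*} [NontriviallyNormedField 𝕜] [CompleteSpace 𝕜] [NormedAddCommGroup E]
  [NormedSpace 𝕜 E] [FiniteDimensional 𝕜 E] [NormedAddCommGroup F] [NormedSpace 𝕜 F]
  {A : E →ₗ[𝕜] E}

theorem LinearMap.exists_continuousLinearEquiv_coe_eq_of_det_ne_zero (hA : LinearMap.det A ≠ 0) :
    ∃ e : E ≃L[𝕜] E, ⇑e = ⇑A :=
  ⟨(A.equivOfDetNeZero hA).toContinuousLinearEquiv, by ext; simp⟩

theorem fderiv_comp_linearMap_apply (hA : LinearMap.det A ≠ 0) (f : E → F) (x u : E) :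
    fderiv 𝕜 (fun y => f (A y)) x u = fderiv 𝕜 f (A x) (A u) := by
  obtain ⟨e, he⟩ := A.exists_continuousLinearEquiv_coe_eq_of_det_ne_zero hA
  have hfe : (fun y => f (A y)) = f ∘ e := by rw [he]; rfl
  rw [hfe, e.comp_right_fderiv]
  simp [he]

theorem iteratedFDeriv_comp_linearMap_apply (hA : LinearMap.det A ≠ 0) (f : E → F) (n : ℕ)
    (x : E) (v : Fin n → E) :
    iteratedFDeriv 𝕜 n (fun y => f (A y)) x v = iteratedFDeriv 𝕜 n f (A x) (fun i => A (v i)) := by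
  obtain ⟨e, he⟩ := A.exists_continuousLinearEquiv_coe_eq_of_det_ne_zero hA
  have hfe : (fun y => f (A y)) = f ∘ e := by rw [he]; rfl
  rw [hfe, ← iteratedFDerivWithin_univ, ← Set.preimage_univ (f := e),
    e.iteratedFDerivWithin_comp_right f uniqueDiffOn_univ (Set.mem_univ _), iteratedFDerivWithin_univ]
  simp [he]

end LinearChangeOfVariables

section Plane

variable {h : (Fin 2 → ℝ) → ℝ} {x : Fin 2 → ℝ} {A : (Fin 2 → ℝ) →ₗ[ℝ] (Fin 2 → ℝ)}

theorem wrot_comp_linearMap (hA : LinearMap.det A ≠ 0) :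
    A (wrot (fun y => h (A y)) x) = LinearMap.det A • wrot h (A x) := by
  simp only [wrot, pd1, fderiv_comp_linearMap_apply hA]
  exact A.apply_rot_comp_eq_det_smul (fderiv ℝ h (A x))

theorem Wl_comp_linearMap (hA : LinearMap.det A ≠ 0) (n : ℕ) :
    Wl n (fun y => h (A y)) x = LinearMap.det A ^ n * Wl n h (A x) := by
  have hw : (fun _ : Fin n => A (wrot (fun y => h (A y)) x)) =
      fun _ => LinearMap.det A • wrot h (A x) :=
    funext fun _ => wrot_comp_linearMap hA
  rw [Wl, Wl, iteratedFDeriv_comp_linearMap_apply hA, hw,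
    ContinuousMultilinearMap.map_smul_univ]
  simp only [Finset.prod_const, Finset.card_univ, Fintype.card_fin, smul_eq_mul]
  ring

theorem K2_eq_Wl_two (hh : ContDiffAt ℝ 2 h x) : K2 h x = Wl 2 h x := by
  have hsymm := hh.isSymmSndFDerivAt (by simp) (Pi.single 0 1) (Pi.single 1 1)
  rw [Wl, iteratedFDeriv_two_apply, Pi.eq_smul_single_add_smul_single (wrot h x)]
  simp only [K2, pd1, pd2, iteratedFDeriv_two_apply, wrot, map_add, map_smul,
    add_apply, smul_apply, smul_eq_mul,
    Matrix.cons_val_zero, Matrix.cons_val_one, Nat.factorial_two, hsymm]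
  ring

theorem K3_eq_Wl_three (hh : ContDiff ℝ 3 h) : K3 h x = Wl 3 h x := by
  have h010 := hh.fderiv_fderiv_fderiv_swap₂₃ x (Pi.single 0 1) (Pi.single 1 1) (Pi.single 0 1)
  have h100 := (hh.fderiv_fderiv_fderiv_swap₁₂ x (Pi.single 1 1) (Pi.single 0 1)
    (Pi.single 0 1)).trans h010
  have h101 := hh.fderiv_fderiv_fderiv_swap₁₂ x (Pi.single 1 1) (Pi.single 0 1) (Pi.single 1 1)
  have h110 := (hh.fderiv_fderiv_fderiv_swap₂₃ x (Pi.single 1 1) (Pi.single 1 1)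
    (Pi.single 0 1)).trans h101
  rw [Wl, iteratedFDeriv_three_apply, Pi.eq_smul_single_add_smul_single (wrot h x),
    show Nat.factorial 3 = 6 from rfl]
  simp only [K3, pd1, pd3, iteratedFDeriv_three_apply, wrot, map_add, map_smul,
    add_apply, smul_apply, smul_eq_mul,
    Matrix.cons_val_zero, Matrix.cons_val_one, Matrix.cons_val_two, Matrix.tail_cons, Matrix.head_cons, Nat.cast_ofNat,
    h010, h100, h101, h110]
  ring

end Plane

theorem Il_invariance_general (l : ℕ) (h : (Fin 2 → ℝ) → ℝ) (hh : ContDiff ℝ (max l 3) h)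
    (A : (Fin 2 → ℝ) →ₗ[ℝ] (Fin 2 → ℝ)) (hA : LinearMap.det A ≠ 0)
    (x : Fin 2 → ℝ) :
    Il l (fun y => h (A y)) x = Il l h (A x) := by
  have h3 : ContDiff ℝ 3 h := hh.of_le le_sup_right
  have h3A : ContDiff ℝ 3 (fun y => h (A y)) := h3.comp A.toContinuousLinearMap.contDiff
  rw [Il, Il, K2_eq_Wl_two (h3A.of_le (by norm_num)).contDiffAt, K3_eq_Wl_three h3A,
    K2_eq_Wl_two (h3.of_le (by norm_num)).contDiffAt, K3_eq_Wl_three h3,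
    Wl_comp_linearMap hA, Wl_comp_linearMap hA, Wl_comp_linearMap hA]
  have hcancel (a b : ℝ) :
      3 * (LinearMap.det A ^ 2 * a) / (LinearMap.det A ^ 3 * b) * LinearMap.det A = 3 * a / b := by
    rcases eq_or_ne b 0 with rfl | hb
    · simp
    · field_simp
  rw [← hcancel (Wl 2 h (A x)) (Wl 3 h (A x)), mul_pow, mul_assoc]

/-- The functions `I_l` are `GL(2)`-invariants of binary forms:
`I_l(h∘A)(x) = I_l(h)(Ax)` for every invertible linear map `A`, provided
`K₂(h)(Ax) ≠ 0` and `K₃(h)(Ax) ≠ 0`. -/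
theorem Il_invariance (l : ℕ) (h : (Fin 2 → ℝ) → ℝ) (hh : ContDiff ℝ (max l 3) h)
    (A : (Fin 2 → ℝ) →ₗ[ℝ] (Fin 2 → ℝ)) (hA : LinearMap.det A ≠ 0)
    (x : Fin 2 → ℝ) (hx2 : K2 h (A x) ≠ 0) (hx3 : K3 h (A x) ≠ 0) :
    Il l (fun y => h (A y)) x = Il l h (A x) :=
  Il_invariance_general l h hh A hA x
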